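/- arXiv:1403.7474 — 6 statements merged into one kernel-verified Lean document; each statement's English description precedes it below -/
import Mathlib

section
/- Let Γ = (ℤ/2)³ with λ(x,y) = (−1)^{⟨x,y⟩} where ⟨x,y⟩ = x₁y₁+x₂y₂+x₃y₃. Define σ(x,y) := (−1)^{x₁(y₂+y₃)+x₂y₃}. Then σ is a biadditive multiplier and λ^σ(x,y) := λ(x,y)σ(x,y)σ(y,x)^{−1} = 1 for all x,y in the subgroup Γ₀ = {x : ⟨x,x⟩ even} = {(0,0,0),(0,1,1),(1,0,1),(1,1,0)}. -/
/-- The standard pairing on (ℤ/2)³. -/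
def ip8 (x y : Fin 3 → ZMod 2) : ZMod 2 := x 0 * y 0 + x 1 * y 1 + x 2 * y 2

/-- The commutation factor λ(x,y) = (−1)^⟨x,y⟩ on (ℤ/2)³. -/
def lam8 (x y : Fin 3 → ZMod 2) : ℝ := (-1) ^ (ip8 x y).val

/-- The multiplier σ(x,y) = (−1)^{x₁(y₂+y₃)+x₂y₃}. -/
def sig8 (x y : Fin 3 → ZMod 2) : ℝ := (-1) ^ (x 0 * (y 1 + y 2) + x 1 * y 2).val

/-!
Write σ = (−1)^β with β(x,y) = x₁(y₂+y₃) + x₂y₃, a bilinear form over 𝔽₂; biadditivity of σ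
is then bilinearity of β. For λ^σ, the exponent ⟨x,y⟩ + β(x,y) + β(y,x) adds up every monomial
xᵢyⱼ exactly once, so it equals (x₁+x₂+x₃)(y₁+y₂+y₃); and x₁+x₂+x₃ = ⟨x,x⟩ because a² = a in 𝔽₂.
-/

theorem neg_one_pow_val_add_zmod_two {R : Type*} [Ring R] (a b : ZMod 2) :
    (-1 : R) ^ (a + b).val = (-1) ^ a.val * (-1) ^ b.val := by
  rw [ZMod.val_add, ← neg_one_pow_eq_pow_mod_two (R := R), pow_add]

theorem inv_neg_one_pow {K : Type*} [DivisionMonoid K] [HasDistribNeg K] (n : ℕ) :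
    ((-1 : K) ^ n)⁻¹ = (-1) ^ n := by
  rw [← inv_pow, inv_neg_one]

def sig8Exponent (x y : Fin 3 → ZMod 2) : ZMod 2 := x 0 * (y 1 + y 2) + x 1 * y 2

theorem sig8_eq (x y : Fin 3 → ZMod 2) : sig8 x y = (-1) ^ (sig8Exponent x y).val := rfl

theorem sig8Exponent_add_left (x y z : Fin 3 → ZMod 2) :
    sig8Exponent (x + y) z = sig8Exponent x z + sig8Exponent y z := by
  simp only [sig8Exponent, Pi.add_apply]
  ring

theorem sig8Exponent_add_right (x y z : Fin 3 → ZMod 2) :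
    sig8Exponent x (y + z) = sig8Exponent x y + sig8Exponent x z := by
  simp only [sig8Exponent, Pi.add_apply]
  ring

theorem ip8_add_sig8Exponent_add_sig8Exponent (x y : Fin 3 → ZMod 2) :
    ip8 x y + sig8Exponent x y + sig8Exponent y x = (x 0 + x 1 + x 2) * (y 0 + y 1 + y 2) := by
  simp only [ip8, sig8Exponent]
  ring

theorem ip8_self (x : Fin 3 → ZMod 2) : ip8 x x = x 0 + x 1 + x 2 := by
  simp only [ip8, ← sq, ZMod.pow_card]

theorem sig8_add_left (x y z : Fin 3 → ZMod 2) : sig8 (x + y) z = sig8 x z * sig8 y z := by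
  simp only [sig8_eq, sig8Exponent_add_left, neg_one_pow_val_add_zmod_two]

theorem sig8_add_right (x y z : Fin 3 → ZMod 2) : sig8 x (y + z) = sig8 x y * sig8 x z := by
  simp only [sig8_eq, sig8Exponent_add_right, neg_one_pow_val_add_zmod_two]

theorem lam8_mul_sig8_mul_inv_sig8 (x y : Fin 3 → ZMod 2) :
    lam8 x y * sig8 x y * (sig8 y x)⁻¹ = (-1) ^ (ip8 x x * ip8 y y).val := by
  rw [ip8_self, ip8_self, ← ip8_add_sig8Exponent_add_sig8Exponent, sig8_eq, sig8_eq,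
    inv_neg_one_pow, neg_one_pow_val_add_zmod_two, neg_one_pow_val_add_zmod_two, lam8]

/-- σ(x,y) = (−1)^{x₁(y₂+y₃)+x₂y₃} is a biadditive multiplier on Γ = (ℤ/2)³ and
λ^σ(x,y) = λ(x,y)σ(x,y)σ(y,x)⁻¹ = 1 for all x,y in the even subgroup
Γ₀ = {x : ⟨x,x⟩ = 0} = {(0,0,0),(0,1,1),(1,0,1),(1,1,0)}. -/
theorem quaternion_multiplier_trivializes_even_part :
    (∀ x y z : Fin 3 → ZMod 2, sig8 (x + y) z = sig8 x z * sig8 y z) ∧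
    (∀ x y z : Fin 3 → ZMod 2, sig8 x (y + z) = sig8 x y * sig8 x z) ∧
    (∀ x y : Fin 3 → ZMod 2, ip8 x x = 0 → ip8 y y = 0 →
      lam8 x y * sig8 x y * (sig8 y x)⁻¹ = 1) := by
  refine ⟨sig8_add_left, sig8_add_right, fun x y hx _ => ?_⟩
  rw [lam8_mul_sig8_mul_inv_sig8, hx, zero_mul, ZMod.val_zero, pow_zero]
end

section
/- Let A be a (Γ,λ^σ)-commutative algebra such that A⁰ is a local ring, and let I be a maximal homogeneous ideal of A. Then for each γ ∈ Γ, every element of A^γ not in I ∩ A^γ is invertible in A; i.e. A^γ \ I^γ = A^γ ∩ A^×. -/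
set_option maxHeartbeats 1000000


/-- Let A be a (Γ,λ^σ)-commutative algebra (graded-commutative for a
commutation factor μ = λ^σ) whose degree-zero part A⁰ is a local ring, and let
I be a maximal homogeneous two-sided ideal of A. Then for every γ ∈ Γ, a
homogeneous element a ∈ A^γ lies outside I if and only if it is invertible,
i.e. A^γ \ I^γ = A^γ ∩ A^×. -/
theorem maximal_homogeneous_ideal_complement_units
    {Γ : Type*} [AddCommGroup Γ] [DecidableEq Γ] {𝕂 : Type*} [Field 𝕂]
    {A : Type*} [Ring A] [Algebra 𝕂 A]
    (𝒜 : Γ → Submodule 𝕂 A) [GradedAlgebra 𝒜] (μ : Γ → Γ → 𝕂ˣ)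
    (hC1 : ∀ x y, μ x y * μ y x = 1)
    (hC2 : ∀ x y z, μ (x + y) z = μ x z * μ y z)
    (hC3 : ∀ z x y, μ z (x + y) = μ z x * μ z y)
    (hcomm : ∀ (α β : Γ) (a b : A), a ∈ 𝒜 α → b ∈ 𝒜 β →
      a * b = (μ α β : 𝕂) • (b * a))
    (hloc : IsLocalRing ↥(𝒜 0))
    (I : Submodule 𝕂 A)
    (hIl : ∀ a b : A, b ∈ I → a * b ∈ I)
    (hIr : ∀ a b : A, b ∈ I → b * a ∈ I)
    (hIhom : ∀ a ∈ I, ∀ γ : Γ, (DirectSum.decompose 𝒜 a γ : A) ∈ I)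
    (hIproper : I ≠ ⊤)
    (hImax : ∀ J : Submodule 𝕂 A,
      (∀ a b : A, b ∈ J → a * b ∈ J) → (∀ a b : A, b ∈ J → b * a ∈ J) →
      (∀ a ∈ J, ∀ γ : Γ, (DirectSum.decompose 𝒜 a γ : A) ∈ J) →
      I ≤ J → J = I ∨ J = ⊤) :
    ∀ (γ : Γ) (a : A), a ∈ 𝒜 γ → (a ∉ I ↔ IsUnit a) := by
  classical
  intro γ a ha
  have hItop : (1 : A) ∉ I := by
    intro h1
    exact hIproper (Submodule.eq_top_iff'.2 fun x => by simpa using hIl x 1 h1)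
  -- units of the degree-zero part are units of A
  have key : ∀ v : ↥(𝒜 0), IsUnit v → IsUnit (v : A) := by
    intro v hv
    obtain ⟨u, rfl⟩ := hv
    exact ⟨⟨u.val, u.inv, congrArg Subtype.val u.val_inv,
      congrArg Subtype.val u.inv_val⟩, rfl⟩
  constructor
  · intro haI
    -- the span of homogeneous multiples x * a * y
    set S : Set A :=
      {z | ∃ (α β : Γ) (x y : A), x ∈ 𝒜 α ∧ y ∈ 𝒜 β ∧ z = x * a * y} with hS
    set T : Submodule 𝕂 A := Submodule.span 𝕂 S with hT
    have haT : a ∈ T :=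
      Submodule.subset_span ⟨0, 0, 1, 1, SetLike.one_mem_graded _,
        SetLike.one_mem_graded _, by rw [one_mul, mul_one]⟩
    have hTl : ∀ c t : A, t ∈ T → c * t ∈ T := by
      intro c t ht
      induction ht using Submodule.span_induction with
      | mem z hz =>
        obtain ⟨α, β, x, y, hx, hy, rfl⟩ := hz
        have : c * (x * a * y)
            = ∑ δ ∈ (DirectSum.decompose 𝒜 c).support,
              ((DirectSum.decompose 𝒜 c δ : A) * x) * a * y := by
          conv_lhs => rw [← DirectSum.sum_support_decompose 𝒜 c]
          rw [Finset.sum_mul]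
          exact Finset.sum_congr rfl fun δ _ => by noncomm_ring
        rw [this]
        exact Submodule.sum_mem _ fun δ _ => Submodule.subset_span
          ⟨δ + α, β, _, y, SetLike.mul_mem_graded (SetLike.coe_mem _) hx, hy, rfl⟩
      | zero => rw [mul_zero]; exact T.zero_mem
      | add x y hx hy ihx ihy => rw [mul_add]; exact T.add_mem ihx ihy
      | smul k x hx ihx => rw [mul_smul_comm]; exact T.smul_mem k ihx
    have hTr : ∀ c t : A, t ∈ T → t * c ∈ T := by
      intro c t ht
      induction ht using Submodule.span_induction with
      | mem z hz =>
        obtain ⟨α, β, x, y, hx, hy, rfl⟩ := hz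
        have : (x * a * y) * c
            = ∑ δ ∈ (DirectSum.decompose 𝒜 c).support,
              x * a * (y * (DirectSum.decompose 𝒜 c δ : A)) := by
          conv_lhs => rw [← DirectSum.sum_support_decompose 𝒜 c]
          rw [Finset.mul_sum]
          exact Finset.sum_congr rfl fun δ _ => by noncomm_ring
        rw [this]
        exact Submodule.sum_mem _ fun δ _ => Submodule.subset_span
          ⟨α, β + δ, x, _, hx, SetLike.mul_mem_graded hy (SetLike.coe_mem _), rfl⟩
      | zero => rw [zero_mul]; exact T.zero_mem
      | add x y hx hy ihx ihy => rw [add_mul]; exact T.add_mem ihx ihy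
      | smul k x hx ihx => rw [smul_mul_assoc]; exact T.smul_mem k ihx
    have hThom : ∀ t ∈ T, ∀ γ' : Γ, (DirectSum.decompose 𝒜 t γ' : A) ∈ T := by
      intro t ht γ'
      induction ht using Submodule.span_induction with
      | mem z hz =>
        obtain ⟨α, β, x, y, hx, hy, rfl⟩ := hz
        have hmem : x * a * y ∈ 𝒜 (α + γ + β) :=
          SetLike.mul_mem_graded (SetLike.mul_mem_graded hx ha) hy
        by_cases hγ : γ' = α + γ + β
        · subst hγ
          rw [DirectSum.decompose_of_mem_same 𝒜 hmem]
          exact Submodule.subset_span ⟨α, β, x, y, hx, hy, rfl⟩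
        · rw [DirectSum.decompose_of_mem_ne 𝒜 hmem (Ne.symm hγ)]
          exact T.zero_mem
      | zero => rw [DirectSum.decompose_zero]; simpa using T.zero_mem
      | add x y hx hy ihx ihy =>
        rw [DirectSum.decompose_add]
        push_cast
        exact T.add_mem ihx ihy
      | smul k x hx ihx =>
        rw [DirectSum.decompose_smul]
        push_cast
        exact T.smul_mem k ihx
    -- the degree-zero part of an element of T factors through a on both sides
    have hfac : ∀ t ∈ T, ∃ w w' : A,
        (DirectSum.decompose 𝒜 t 0 : A) = w * a ∧
        (DirectSum.decompose 𝒜 t 0 : A) = a * w' := by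
      intro t ht
      induction ht using Submodule.span_induction with
      | mem z hz =>
        obtain ⟨α, β, x, y, hx, hy, rfl⟩ := hz
        have hmem : x * a * y ∈ 𝒜 (α + γ + β) :=
          SetLike.mul_mem_graded (SetLike.mul_mem_graded hx ha) hy
        by_cases hγ : (0 : Γ) = α + γ + β
        · refine ⟨(μ γ β : 𝕂) • (x * y), (μ α γ : 𝕂) • (x * y), ?_, ?_⟩
          · rw [DirectSum.decompose_of_mem_same 𝒜 (hγ ▸ hmem)]
            rw [mul_assoc, hcomm γ β a y ha hy, mul_smul_comm,
              smul_mul_assoc, mul_assoc]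
          · rw [DirectSum.decompose_of_mem_same 𝒜 (hγ ▸ hmem)]
            rw [hcomm α γ x a hx ha, smul_mul_assoc, mul_smul_comm,
              mul_assoc]
        · refine ⟨0, 0, ?_, ?_⟩ <;>
            rw [DirectSum.decompose_of_mem_ne 𝒜 hmem fun h => hγ h.symm] <;>
            simp
      | zero => exact ⟨0, 0, by simp, by simp⟩
      | add x y hx hy ihx ihy =>
        obtain ⟨w₁, w₁', h₁, h₁'⟩ := ihx
        obtain ⟨w₂, w₂', h₂, h₂'⟩ := ihy
        exact ⟨w₁ + w₂, w₁' + w₂',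
          by simp [DirectSum.decompose_add, DirectSum.add_apply, h₁, h₂, add_mul],
          by simp [DirectSum.decompose_add, DirectSum.add_apply, h₁', h₂', mul_add]⟩
      | smul k x hx ihx =>
        obtain ⟨w, w', h, h'⟩ := ihx
        refine ⟨k • w, k • w', ?_, ?_⟩
        · rw [DirectSum.decompose_smul, DFinsupp.smul_apply, Submodule.coe_smul,
            h, smul_mul_assoc]
        · rw [DirectSum.decompose_smul, DFinsupp.smul_apply, Submodule.coe_smul,
            h', mul_smul_comm]
    -- the homogeneous submodule J = I + T
    set J : Submodule 𝕂 A := I ⊔ T with hJ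
    have hJl : ∀ c b : A, b ∈ J → c * b ∈ J := by
      intro c b hb
      obtain ⟨i, hi, t, ht, rfl⟩ := Submodule.mem_sup.1 hb
      rw [mul_add]
      exact Submodule.add_mem_sup (hIl c i hi) (hTl c t ht)
    have hJr : ∀ c b : A, b ∈ J → b * c ∈ J := by
      intro c b hb
      obtain ⟨i, hi, t, ht, rfl⟩ := Submodule.mem_sup.1 hb
      rw [add_mul]
      exact Submodule.add_mem_sup (hIr c i hi) (hTr c t ht)
    have hJhom : ∀ b ∈ J, ∀ γ' : Γ, (DirectSum.decompose 𝒜 b γ' : A) ∈ J := by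
      intro b hb γ'
      obtain ⟨i, hi, t, ht, rfl⟩ := Submodule.mem_sup.1 hb
      rw [DirectSum.decompose_add]
      push_cast
      exact Submodule.add_mem_sup (hIhom i hi γ') (hThom t ht γ')
    rcases hImax J hJl hJr hJhom le_sup_left with hJI | hJtop
    · exact absurd (hJI ▸ (le_sup_right : T ≤ J) haT) haI
    · have h1J : (1 : A) ∈ J := hJtop ▸ Submodule.mem_top
      obtain ⟨i, hi, t, ht, hit⟩ := Submodule.mem_sup.1 h1J
      -- degree-zero components
      have hes : (DirectSum.decompose 𝒜 i 0 : A) + (DirectSum.decompose 𝒜 t 0 : A)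
          = 1 := by
        have h1 : ((1 : DirectSum Γ fun i => ↥(𝒜 i)) 0 : A) = 1 := by
          rw [← DirectSum.decompose_one 𝒜]
          exact DirectSum.decompose_of_mem_same 𝒜 (SetLike.one_mem_graded 𝒜)
        have := congrArg (fun z => (DirectSum.decompose 𝒜 z 0 : A)) hit
        simpa [DirectSum.decompose_add, h1] using this
      have hes' : DirectSum.decompose 𝒜 i 0 + DirectSum.decompose 𝒜 t 0
          = (1 : ↥(𝒜 0)) := Subtype.ext hes
      rcases hloc.isUnit_or_isUnit_of_add_one hes' with he | hs
      · -- impossible: the degree-zero component of i is a unit lying in I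
        exfalso
        obtain ⟨u, hu⟩ := key _ he
        have heI : (DirectSum.decompose 𝒜 i 0 : A) ∈ I := hIhom i hi 0
        have : (↑u⁻¹ : A) * (DirectSum.decompose 𝒜 i 0 : A) ∈ I := hIl _ _ heI
        rw [← hu, Units.inv_mul] at this
        exact hItop this
      · obtain ⟨v, hv⟩ := key _ hs
        obtain ⟨w, w', hw, hw'⟩ := hfac t ht
        have hL : ((↑v⁻¹ : A) * w) * a = 1 := by
          rw [mul_assoc, ← hw, ← hv, Units.inv_mul]
        have hR : a * (w' * (↑v⁻¹ : A)) = 1 := by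
          rw [← mul_assoc, ← hw', ← hv, Units.mul_inv]
        have hLR : (↑v⁻¹ : A) * w = w' * (↑v⁻¹ : A) := left_inv_eq_right_inv hL hR
        exact ⟨⟨a, w' * (↑v⁻¹ : A), hR, by rw [← hLR]; exact hL⟩, rfl⟩
  · rintro ⟨u, rfl⟩ haI
    have : (↑u⁻¹ : A) * (u : A) ∈ I := hIl _ _ haI
    rw [Units.inv_mul] at this
    exact hItop this
end

section
/- Let A be a (Γ,λ)-commutative algebra such that A⁰ is a local ring, and let M be a free graded A-module of rank n admitting bases of degrees μ = (μ₁,…,μₙ) and ν = (ν₁,…,νₙ) in Γⁿ. Then, up to a permutation of the entries of ν, one has νᵢ − μᵢ ∈ Γ_{A^×} for all i, where Γ_{A^×} = {γ ∈ Γ : A^γ ∩ A^× ≠ ∅}. -/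
/-!
Expressing each basis in the other gives mutually inverse change-of-basis matrices `X`, `Y`
whose entries are homogeneous, `X k i` of degree `ν k - μ i`, because the coordinates of a
homogeneous vector in a homogeneous basis are homogeneous. The entry `1 = ∑ i, X 0 i * Y i 0`
is a sum in the local ring `A⁰`, so some `X 0 r * Y r 0` is a unit of `A⁰`. Hence `X 0 r` has a
homogeneous right inverse `b`; as `b * X 0 r` is an idempotent of `A⁰`, it is `1`, and `X 0 r`
is a unit of degree `ν 0 - μ r`. Removing row `0` and column `r` by a Schur complement leaves
homogeneous mutually inverse matrices of size `n - 1`, and we conclude by induction.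
-/

open Finset DirectSum

theorem IsLocalRing.eq_zero_or_eq_one_of_isIdempotentElem {R : Type*} [Ring R] [IsLocalRing R]
    {e : R} (he : IsIdempotentElem e) : e = 0 ∨ e = 1 := by
  rcases isUnit_or_isUnit_of_add_one (add_sub_cancel e 1) with hu | hu
  · exact .inr ((IsIdempotentElem.iff_eq_one_of_isUnit hu).mp he)
  · exact .inl (sub_eq_self.mp ((IsIdempotentElem.iff_eq_one_of_isUnit hu).mp he.one_sub))

namespace Matrix

variable {R : Type*} [Ring R] {n : ℕ}

/-- The Schur complement of the entry `X 0 r`, where `b` is meant to be its inverse. -/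
def pivotComplement (X : Matrix (Fin (n + 1)) (Fin (n + 1)) R) (r : Fin (n + 1)) (b : R) :
    Matrix (Fin n) (Fin n) R :=
  of fun i j => X i.succ (r.succAbove j) - X i.succ r * b * X 0 (r.succAbove j)

variable {X Y : Matrix (Fin (n + 1)) (Fin (n + 1)) R} {r : Fin (n + 1)} {b : R}

theorem pivotComplement_mul (hXY : X * Y = 1) (hbX : b * X 0 r = 1) :
    X.pivotComplement r b * Y.submatrix r.succAbove Fin.succ = 1 := by
  ext i j
  have hrow : ∀ k, ∑ l, X k (r.succAbove l) * Y (r.succAbove l) j.succ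
      = (1 : Matrix _ _ R) k j.succ - X k r * Y r j.succ := fun k => by
    rw [← hXY, mul_apply, Fin.sum_univ_succAbove _ r, add_sub_cancel_left]
  have hcancel : X i.succ r * b * (X 0 r * Y r j.succ) = X i.succ r * Y r j.succ := by
    rw [mul_assoc, ← mul_assoc b, hbX, one_mul]
  simp only [pivotComplement, mul_apply, of_apply, submatrix_apply, sub_mul, sum_sub_distrib,
    mul_assoc (X i.succ r * b), ← mul_sum, hrow, one_apply_ne (Fin.succ_ne_zero j).symm,
    one_apply, Fin.succ_inj, zero_sub, mul_neg, hcancel]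
  abel

theorem submatrix_mul_pivotComplement (hYX : Y * X = 1) (hXb : X 0 r * b = 1) :
    Y.submatrix r.succAbove Fin.succ * X.pivotComplement r b = 1 := by
  ext i j
  have hcol : ∀ k, ∑ l : Fin n, Y (r.succAbove i) l.succ * X l.succ k
      = (1 : Matrix _ _ R) (r.succAbove i) k - Y (r.succAbove i) 0 * X 0 k := fun k => by
    rw [← hYX, mul_apply, Fin.sum_univ_succ, add_sub_cancel_left]
  have hcancel : Y (r.succAbove i) 0 * X 0 r * (b * X 0 (r.succAbove j))
      = Y (r.succAbove i) 0 * X 0 (r.succAbove j) := by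
    rw [mul_assoc, ← mul_assoc (X 0 r), hXb, one_mul]
  simp only [pivotComplement, mul_apply, of_apply, submatrix_apply, mul_sub, sum_sub_distrib,
    ← mul_assoc, ← sum_mul, hcol, one_apply_ne (Fin.succAbove_ne r i),
    one_apply, Fin.succAbove_right_inj, zero_sub, neg_mul]
  rw [mul_assoc _ b, hcancel]
  abel

end Matrix

section GradedRing

variable {ι R σ : Type*} [AddGroup ι] [SetLike σ R] (𝒜 : ι → σ)

def unitDegrees [Monoid R] : Set ι := {γ | ∃ a ∈ 𝒜 γ, IsUnit a}

def Matrix.IsHomogeneous {m n : Type*} (ν : m → ι) (μ : n → ι) (X : Matrix m n R) : Prop :=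
  ∀ i j, X i j ∈ 𝒜 (ν i - μ j)

variable {𝒜}

theorem Matrix.IsHomogeneous.submatrix {m n m' n' : Type*} {ν : m → ι} {μ : n → ι}
    {X : Matrix m n R} (hX : X.IsHomogeneous 𝒜 ν μ) (e : m' → m) (f : n' → n) :
    (X.submatrix e f).IsHomogeneous 𝒜 (ν ∘ e) (μ ∘ f) :=
  fun i j => hX (e i) (f j)

variable [Ring R] [AddSubgroupClass σ R] [SetLike.GradedMonoid 𝒜]

theorem Matrix.IsHomogeneous.pivotComplement {n : ℕ} {ν μ : Fin (n + 1) → ι}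
    {X : Matrix (Fin (n + 1)) (Fin (n + 1)) R} (hX : X.IsHomogeneous 𝒜 ν μ) {r : Fin (n + 1)}
    {b : R} (hb : b ∈ 𝒜 (μ r - ν 0)) :
    (X.pivotComplement r b).IsHomogeneous 𝒜 (ν ∘ Fin.succ) (μ ∘ r.succAbove) := fun i j =>
  sub_mem (hX _ _) <| by
    simpa only [Function.comp_apply, sub_add_sub_cancel] using
      SetLike.mul_mem_graded (SetLike.mul_mem_graded (hX i.succ r) hb) (hX 0 (r.succAbove j))

variable [IsLocalRing (𝒜 0)]

theorem mul_eq_one_symm_of_mem_graded {a b : R} {γ : ι} (ha : a ∈ 𝒜 γ) (hb : b ∈ 𝒜 (-γ))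
    (hab : a * b = 1) : b * a = 1 := by
  let e : 𝒜 0 := ⟨b * a, by simpa using SetLike.mul_mem_graded hb ha⟩
  have he : IsIdempotentElem e := Subtype.ext <| by
    change b * a * (b * a) = b * a
    rw [mul_assoc, ← mul_assoc a, hab, one_mul]
  rcases IsLocalRing.eq_zero_or_eq_one_of_isIdempotentElem he with h | h
  · have ha0 : a = 0 := calc
      a = a * b * a := by rw [hab, one_mul]
      _ = 0 := by rw [mul_assoc, show b * a = 0 from congrArg Subtype.val h, mul_zero]
    exact absurd (Subtype.ext (by simp [← hab, ha0]) : (1 : 𝒜 0) = 0) one_ne_zero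
  · exact congrArg Subtype.val h

theorem Matrix.IsHomogeneous.exists_pivot {m n : Type*} [Fintype n] [DecidableEq m]
    {ν : m → ι} {μ : n → ι} {X : Matrix m n R} {Y : Matrix n m R} (hX : X.IsHomogeneous 𝒜 ν μ)
    (hY : Y.IsHomogeneous 𝒜 μ ν) (hXY : X * Y = 1) (k : m) :
    ∃ i, ∃ b ∈ 𝒜 (μ i - ν k), X k i * b = 1 ∧ b * X k i = 1 := by
  let t : n → 𝒜 0 := fun i => ⟨X k i * Y i k, by
    simpa using SetLike.mul_mem_graded (hX k i) (hY i k)⟩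
  have ht : ∑ i, t i = 1 := Subtype.ext <| by
    simpa [AddSubmonoidClass.coe_finsetSum, t, Matrix.mul_apply] using
      congrFun (congrFun hXY k) k
  obtain ⟨i, -, u, hu⟩ := IsLocalRing.exists_of_isUnit_sum (ht ▸ isUnit_one)
  have hb : Y i k * ↑(↑u⁻¹ : 𝒜 0) ∈ 𝒜 (μ i - ν k) := by
    simpa using SetLike.mul_mem_graded (hY i k) (↑u⁻¹ : 𝒜 0).2
  have hXb : X k i * (Y i k * ↑(↑u⁻¹ : 𝒜 0)) = 1 := by
    rw [← mul_assoc]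
    exact congrArg Subtype.val (hu ▸ u.mul_inv)
  exact ⟨i, _, hb, hXb, mul_eq_one_symm_of_mem_graded (hX k i) (by rwa [neg_sub]) hXb⟩

theorem Matrix.IsHomogeneous.exists_perm_sub_mem_unitDegrees {n : ℕ} {ν μ : Fin n → ι}
    {X Y : Matrix (Fin n) (Fin n) R} (hX : X.IsHomogeneous 𝒜 ν μ) (hY : Y.IsHomogeneous 𝒜 μ ν)
    (hXY : X * Y = 1) (hYX : Y * X = 1) :
    ∃ π : Equiv.Perm (Fin n), ∀ i, ν (π i) - μ i ∈ unitDegrees 𝒜 := by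
  induction n with
  | zero => exact ⟨1, fun i => i.elim0⟩
  | succ n ih =>
    obtain ⟨r, b, hb, hXb, hbX⟩ := hX.exists_pivot hY hXY 0
    obtain ⟨π, hπ⟩ := ih (hX.pivotComplement hb) (hY.submatrix r.succAbove Fin.succ)
      (Matrix.pivotComplement_mul hXY hbX) (Matrix.submatrix_mul_pivotComplement hYX hXb)
    refine ⟨(finSuccEquiv' r).trans (π.optionCongr.trans (finSuccEquiv n).symm), fun i => ?_⟩
    rcases Fin.eq_self_or_eq_succAbove r i with rfl | ⟨j, rfl⟩
    · simpa using ⟨X 0 i, hX 0 i, ⟨X 0 i, b, hXb, hbX⟩, rfl⟩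
    · simpa using hπ j

end GradedRing

namespace Module.Basis

variable {κ R M : Type*} [Fintype κ] [Ring R] [AddCommMonoid M] [Module R M]

theorem sum_repr_mul_repr' (b b' : Basis κ R M) (x : M) (j : κ) :
    ∑ i, b.repr x i * b'.repr (b i) j = b'.repr x j := by
  conv_rhs => rw [← b.sum_repr x]
  simp only [map_sum, map_smul, Finsupp.coe_finsetSum, Finset.sum_apply, Finsupp.smul_apply,
    smul_eq_mul]

/-- Coordinates are written as rows, the order in which change-of-basis matrices over a
noncommutative ring compose. -/
noncomputable def reprRows (b : Basis κ R M) (v : κ → M) : Matrix κ κ R :=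
  Matrix.of fun k i => b.repr (v k) i

theorem reprRows_mul_reprRows [DecidableEq κ] (b b' : Basis κ R M) :
    b.reprRows b' * b'.reprRows b = 1 := by
  ext k j
  simp only [reprRows, Matrix.mul_apply, Matrix.of_apply, sum_repr_mul_repr', repr_self_apply,
    Matrix.one_apply]

end Module.Basis

section GradedModule

variable {ι R M σ τ κ : Type*} [AddGroup ι] [DecidableEq ι] [Ring R] [SetLike σ R]
  [AddSubgroupClass σ R] (𝒜 : ι → σ) [GradedRing 𝒜] [AddCommMonoid M] [Module R M]
  [SetLike τ M] [AddSubmonoidClass τ M] {ℳ : ι → τ} [Decomposition ℳ] [SetLike.GradedSMul 𝒜 ℳ]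

theorem coe_decompose_smul_add_of_right_mem {m : M} {j : ι} (hm : m ∈ ℳ j) (a : R) (i : ι) :
    (decompose ℳ (a • m) (i + j) : M) = (decompose 𝒜 a i : R) • m := by
  induction a using Decomposition.inductionOn 𝒜 with
  | zero => simp
  | @homogeneous k a =>
    have ham : (a : R) • m ∈ ℳ (k + j) := SetLike.GradedSMul.smul_mem a.2 hm
    by_cases hik : i = k
    · subst hik
      rw [decompose_of_mem_same ℳ ham, decompose_coe, of_eq_same]
    · rw [decompose_of_mem_ne ℳ ham (by simpa [eq_comm] using hik), decompose_coe,
        of_eq_of_ne _ _ _ hik, ZeroMemClass.coe_zero, zero_smul]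
  | add a a' ha ha' => simp [add_smul, ha, ha']

variable {𝒜} [Fintype κ]

theorem Module.Basis.repr_mem_of_mem (b : Module.Basis κ R M) {μ : κ → ι}
    (hb : ∀ k, b k ∈ ℳ (μ k)) {m : M} {γ : ι} (hm : m ∈ ℳ γ) (k : κ) :
    b.repr m k ∈ 𝒜 (γ - μ k) := by
  let c k := (decompose 𝒜 (b.repr m k) (γ - μ k) : R)
  have hmc : m = ∑ k, c k • b k := calc
    m = decompose ℳ (∑ k, b.repr m k • b k) γ := by rw [b.sum_repr, decompose_of_mem_same ℳ hm]
    _ = ∑ k, c k • b k := by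
      rw [decompose_sum, DirectSum.sum_apply, AddSubmonoidClass.coe_finsetSum]
      refine sum_congr rfl fun k _ => ?_
      rw [← coe_decompose_smul_add_of_right_mem 𝒜 (hb k), sub_add_cancel]
  have hrepr : b.repr m = c := by
    conv_lhs => rw [hmc]
    exact b.repr_sum_self c
  rw [hrepr]
  exact (decompose 𝒜 _ _).2

theorem Module.Basis.reprRows_isHomogeneous (b : Module.Basis κ R M) (v : κ → M) {μ ν : κ → ι}
    (hb : ∀ i, b i ∈ ℳ (μ i)) (hv : ∀ k, v k ∈ ℳ (ν k)) :
    (b.reprRows v).IsHomogeneous 𝒜 ν μ :=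
  fun k i => b.repr_mem_of_mem hb (hv k) i

end GradedModule

theorem degrees_of_bases_differ_by_unit_degrees_general
    {Γ : Type*} [AddCommGroup Γ] [DecidableEq Γ] {𝕂 : Type*} [Field 𝕂]
    {A : Type*} [Ring A] [Algebra 𝕂 A]
    (𝒜 : Γ → Submodule 𝕂 A) [GradedAlgebra 𝒜]
    (hloc : IsLocalRing ↥(𝒜 0))
    {M : Type*} [AddCommGroup M] [Module A M] [Module 𝕂 M]
    (ℳ : Γ → Submodule 𝕂 M) [DirectSum.Decomposition ℳ]
    (hact : ∀ (α β : Γ) (a : A) (m : M), a ∈ 𝒜 α → m ∈ ℳ β → a • m ∈ ℳ (α + β))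
    {n : ℕ} (μ ν : Fin n → Γ)
    (bμ : Module.Basis (Fin n) A M) (hbμ : ∀ i, bμ i ∈ ℳ (μ i))
    (bν : Module.Basis (Fin n) A M) (hbν : ∀ i, bν i ∈ ℳ (ν i)) :
    ∃ π : Equiv.Perm (Fin n), ∀ i,
      ∃ a : A, a ∈ 𝒜 (ν (π i) - μ i) ∧ IsUnit a := by
  have := hloc
  have : SetLike.GradedSMul 𝒜 ℳ := ⟨fun _ _ _ _ ha hm => hact _ _ _ _ ha hm⟩
  exact Matrix.IsHomogeneous.exists_perm_sub_mem_unitDegrees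
    (bμ.reprRows_isHomogeneous bν hbμ hbν) (bν.reprRows_isHomogeneous bμ hbν hbμ)
    (bμ.reprRows_mul_reprRows bν) (bν.reprRows_mul_reprRows bμ)

/-- Let A be a (Γ,λ)-commutative algebra with A⁰ local, and M a free graded
A-module of rank n admitting homogeneous bases of degrees μ and ν ∈ Γⁿ.
Then, up to a permutation of the entries of ν, one has νᵢ − μᵢ ∈ Γ_{A^×}
for all i, where Γ_{A^×} = {γ : A^γ contains an invertible element}. -/
theorem degrees_of_bases_differ_by_unit_degrees
    {Γ : Type*} [AddCommGroup Γ] [DecidableEq Γ] {𝕂 : Type*} [Field 𝕂]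
    {A : Type*} [Ring A] [Algebra 𝕂 A]
    (𝒜 : Γ → Submodule 𝕂 A) [GradedAlgebra 𝒜] (lam : Γ → Γ → 𝕂ˣ)
    (hC1 : ∀ x y, lam x y * lam y x = 1)
    (hC2 : ∀ x y z, lam (x + y) z = lam x z * lam y z)
    (hC3 : ∀ z x y, lam z (x + y) = lam z x * lam z y)
    (hcomm : ∀ (α β : Γ) (a b : A), a ∈ 𝒜 α → b ∈ 𝒜 β →
      a * b = (lam α β : 𝕂) • (b * a))
    (hloc : IsLocalRing ↥(𝒜 0))
    {M : Type*} [AddCommGroup M] [Module A M] [Module 𝕂 M]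
    [IsScalarTower 𝕂 A M]
    (ℳ : Γ → Submodule 𝕂 M) [DirectSum.Decomposition ℳ]
    (hact : ∀ (α β : Γ) (a : A) (m : M), a ∈ 𝒜 α → m ∈ ℳ β → a • m ∈ ℳ (α + β))
    {n : ℕ} (μ ν : Fin n → Γ)
    (bμ : Module.Basis (Fin n) A M) (hbμ : ∀ i, bμ i ∈ ℳ (μ i))
    (bν : Module.Basis (Fin n) A M) (hbν : ∀ i, bν i ∈ ℳ (ν i)) :
    ∃ π : Equiv.Perm (Fin n), ∀ i,
      ∃ a : A, a ∈ 𝒜 (ν (π i) - μ i) ∧ IsUnit a :=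
  degrees_of_bases_differ_by_unit_degrees_general 𝒜 hloc ℳ hact μ ν bμ hbμ bν hbν
end

section
/- Let A be a (Γ,λ)-commutative algebra, σ ∈ 𝔖(λ) an NS-multiplier, and M a graded A-module. Define η_σ on homogeneous graded endomorphisms f of degree f̃ by (η_σ(f))(m) := σ(f̃, m̃) f(m) for homogeneous m. Then for any pair of homogeneous A-linear graded endomorphisms f, g of M of degrees f̃, g̃, one has η_σ(f∘g) = σ(f̃,g̃)^{−1} · η_σ(f) ∘ η_σ(g). -/
/-- Theorem A: for an NS-multiplier σ ∈ 𝔖(λ) and homogeneous A-linear graded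
endomorphisms f, g of a graded A-module M, of degrees df, dg, the map
η_σ(f)(m) := σ(f̃,m̃)•f(m) satisfies η_σ(f∘g) = σ(f̃,g̃)⁻¹ · η_σ(f) ∘ η_σ(g),
evaluated on homogeneous elements. -/
theorem eta_sigma_comp
    {Γ : Type*} [AddCommGroup Γ] {𝕂 : Type*} [Field 𝕂]
    {A : Type*} [Ring A] [Algebra 𝕂 A]
    (𝒜 : Γ → Submodule 𝕂 A) (lam σ : Γ → Γ → 𝕂ˣ) (φ : Γ → ZMod 2)
    (hC1 : ∀ x y, lam x y * lam y x = 1)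
    (hC2 : ∀ x y z, lam (x + y) z = lam x z * lam y z)
    (hC3 : ∀ z x y, lam z (x + y) = lam z x * lam z y)
    (hφ : ∀ x, (lam x x : 𝕂) = (-1) ^ ((φ x).val))
    -- σ is an NS-multiplier: biadditive with λ^σ = λ^super ∘ (φ×φ)
    (hσadd₁ : ∀ x y z, σ (x + y) z = σ x z * σ y z)
    (hσadd₂ : ∀ x y z, σ x (y + z) = σ x y * σ x z)
    (hNS : ∀ x y, (lam x y * σ x y * (σ y x)⁻¹ : 𝕂ˣ) =
      ((-1 : 𝕂ˣ)) ^ ((φ x).val * (φ y).val))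
    (hcomm : ∀ (α β : Γ) (a b : A), a ∈ 𝒜 α → b ∈ 𝒜 β →
      a * b = (lam α β : 𝕂) • (b * a))
    {M : Type*} [AddCommGroup M] [Module A M] [Module 𝕂 M]
    [IsScalarTower 𝕂 A M]
    (ℳ : Γ → Submodule 𝕂 M)
    (hact : ∀ (α β : Γ) (a : A) (m : M), a ∈ 𝒜 α → m ∈ ℳ β → a • m ∈ ℳ (α + β))
    (f g : M →ₗ[A] M) (df dg : Γ)
    (hf : ∀ (α : Γ) (m : M), m ∈ ℳ α → f m ∈ ℳ (α + df))
    (hg : ∀ (α : Γ) (m : M), m ∈ ℳ α → g m ∈ ℳ (α + dg)) :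
    ∀ (γ : Γ) (m : M), m ∈ ℳ γ →
      (σ (df + dg) γ : 𝕂) • f (g m) =
        ((σ df dg : 𝕂))⁻¹ •
          ((σ df (dg + γ) : 𝕂) • f ((σ dg γ : 𝕂) • g m)) := by
  intro γ m hm
  rw [f.map_smul_of_tower, smul_smul, smul_smul]
  congr 1
  have h1 := congrArg (Units.val) (hσadd₁ df dg γ)
  have h2 := congrArg (Units.val) (hσadd₂ df dg γ)
  push_cast at h1 h2 ⊢
  rw [h1, h2]
  field_simp
end

section
/- Let A be a (Γ,λ)-commutative algebra and M a free graded A-module of finite rank with homogeneous basis of degree ν ∈ Γⁿ. Define Tr on a homogeneous matrix X = (Xⁱⱼ) ∈ Mat^x(ν;A) by Tr(X) = Σᵢ λ(νᵢ, x+νᵢ) Xⁱᵢ. Then Tr satisfies the graded trace identity Tr(XY) = λ(x,y) Tr(YX) for all homogeneous X ∈ Mat^x(ν;A), Y ∈ Mat^y(ν;A). -/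
open Finset

lemma graded_trace_aux {Γ : Type*} [AddCommGroup Γ] {G : Type*} [CommGroup G]
    (lam : Γ → Γ → G)
    (hC1 : ∀ x y, lam x y * lam y x = 1)
    (hC2 : ∀ x y z, lam (x + y) z = lam x z * lam y z)
    (hC3 : ∀ z x y, lam z (x + y) = lam z x * lam z y)
    (a b x y : Γ) :
    lam a ((x + y) + a) * lam (x + b - a) (y + a - b)
      = lam x y * lam b ((y + x) + b) := by
  have h0l : ∀ z, lam 0 z = 1 := by
    intro z
    have e : lam 0 z = lam 0 z * lam 0 z := by rw [← hC2, add_zero]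
    exact (left_eq_mul.mp e)
  have h0r : ∀ z, lam z 0 = 1 := by
    intro z
    have e : lam z 0 = lam z 0 * lam z 0 := by rw [← hC3, add_zero]
    exact (left_eq_mul.mp e)
  have hnl : ∀ p z, lam (-p) z = (lam p z)⁻¹ := by
    intro p z
    refine eq_inv_of_mul_eq_one_left ?_
    rw [← hC2, neg_add_cancel, h0l]
  have hnr : ∀ z p, lam z (-p) = (lam z p)⁻¹ := by
    intro z p
    refine eq_inv_of_mul_eq_one_left ?_
    rw [← hC3, neg_add_cancel, h0r]
  have flip : ∀ p q, lam q p = (lam p q)⁻¹ := fun p q =>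
    eq_inv_of_mul_eq_one_left (hC1 q p)
  have hbb : (lam b b)⁻¹ = lam b b := inv_eq_of_mul_eq_one_right (hC1 b b)
  simp only [sub_eq_add_neg, hC2, hC3, hnl, hnr, mul_inv]
  rw [flip a x, flip a b, flip x b, hbb]
  apply Additive.ofMul.injective
  simp only [ofMul_mul, ofMul_inv]
  abel

/-- The graded trace Tr(X) = Σᵢ λ(νᵢ, x+νᵢ)·Xᵢᵢ on homogeneous graded matrices
satisfies Tr(XY) = λ(x,y)·Tr(YX) for homogeneous X of degree x and Y of
degree y (i.e. Tr is a morphism of (Γ,λ)-Lie algebras). -/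
theorem graded_trace_lie_morphism
    {Γ : Type*} [AddCommGroup Γ] {𝕂 : Type*} [Field 𝕂]
    {A : Type*} [Ring A] [Algebra 𝕂 A]
    (𝒜 : Γ → Submodule 𝕂 A) (lam : Γ → Γ → 𝕂ˣ)
    (hC1 : ∀ x y, lam x y * lam y x = 1)
    (hC2 : ∀ x y z, lam (x + y) z = lam x z * lam y z)
    (hC3 : ∀ z x y, lam z (x + y) = lam z x * lam z y)
    (hone : (1 : A) ∈ 𝒜 0)
    (hmul : ∀ (α β : Γ) (a b : A), a ∈ 𝒜 α → b ∈ 𝒜 β → a * b ∈ 𝒜 (α + β))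
    (hcomm : ∀ (α β : Γ) (a b : A), a ∈ 𝒜 α → b ∈ 𝒜 β →
      a * b = (lam α β : 𝕂) • (b * a))
    {n : ℕ} (ν : Fin n → Γ) (x y : Γ)
    (X Y : Matrix (Fin n) (Fin n) A)
    (hX : ∀ i j, X i j ∈ 𝒜 (x + ν j - ν i))
    (hY : ∀ i j, Y i j ∈ 𝒜 (y + ν j - ν i)) :
    (∑ i, (lam (ν i) ((x + y) + ν i) : 𝕂) • (X * Y) i i) =
      (lam x y : 𝕂) • ∑ i, (lam (ν i) ((y + x) + ν i) : 𝕂) • (Y * X) i i := by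
  have step : ∀ i j : Fin n,
      (lam (ν i) ((x + y) + ν i) : 𝕂) • (X i j * Y j i)
        = ((lam x y : 𝕂) * (lam (ν j) ((y + x) + ν j) : 𝕂)) • (Y j i * X i j) := by
    intro i j
    rw [hcomm _ _ _ _ (hX i j) (hY j i), smul_smul]
    congr 1
    have := congrArg (Units.val)
      (graded_trace_aux lam hC1 hC2 hC3 (ν i) (ν j) x y)
    simpa using this
  calc (∑ i, (lam (ν i) ((x + y) + ν i) : 𝕂) • (X * Y) i i)
      = ∑ i, ∑ j, (lam (ν i) ((x + y) + ν i) : 𝕂) • (X i j * Y j i) := by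
        simp [Matrix.mul_apply, Finset.smul_sum]
    _ = ∑ i, ∑ j, ((lam x y : 𝕂) * (lam (ν j) ((y + x) + ν j) : 𝕂)) • (Y j i * X i j) := by
        exact Finset.sum_congr rfl fun i _ => Finset.sum_congr rfl fun j _ => step i j
    _ = ∑ j, ∑ i, ((lam x y : 𝕂) * (lam (ν j) ((y + x) + ν j) : 𝕂)) • (Y j i * X i j) :=
        Finset.sum_comm
    _ = (lam x y : 𝕂) • ∑ i, (lam (ν i) ((y + x) + ν i) : 𝕂) • (Y * X) i i := by
        simp [Matrix.mul_apply, Finset.smul_sum, smul_smul]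
end

section
/- Let σ ∈ 𝔖(λ) be an NS-multiplier, ν ∈ Γⁿ, and define J_σ on a homogeneous graded matrix X of degree x by (J_σ(X))ⁱⱼ := σ(x,νⱼ) σ(νᵢ, x−νᵢ+νⱼ)^{−1} Xⁱⱼ. Then for homogeneous matrices X ∈ Mat^x(ν;A) and Y ∈ Mat^y(ν;A), one has J_σ(XY) = σ(x,y)^{−1} J_σ(X) J_σ(Y), where the product on the right is matrix multiplication in Mat(ν; A_σ) with the twisted algebra product a⋆b = σ(ã,b̃)ab. -/
open Finset

/-- For an NS-multiplier σ ∈ 𝔖(λ) and homogeneous graded matrices X (degree x)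
and Y (degree y), the map (J_σ(X))ᵢⱼ = σ(x,νⱼ)σ(νᵢ,x−νᵢ+νⱼ)⁻¹·Xᵢⱼ satisfies
J_σ(XY) = σ(x,y)⁻¹·J_σ(X)·J_σ(Y), the product on the right being matrix
multiplication over the twisted algebra (a⋆b = σ(ã,b̃)·ab), written out
entrywise with the degrees of the entries of J_σ(X) and J_σ(Y). -/
theorem J_sigma_multiplicative
    {Γ : Type*} [AddCommGroup Γ] {𝕂 : Type*} [Field 𝕂]
    {A : Type*} [Ring A] [Algebra 𝕂 A]
    (𝒜 : Γ → Submodule 𝕂 A) (lam σ : Γ → Γ → 𝕂ˣ) (φ : Γ → ZMod 2)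
    (hC1 : ∀ x y, lam x y * lam y x = 1)
    (hC2 : ∀ x y z, lam (x + y) z = lam x z * lam y z)
    (hC3 : ∀ z x y, lam z (x + y) = lam z x * lam z y)
    (hφ : ∀ x, (lam x x : 𝕂) = (-1) ^ ((φ x).val))
    (hσadd₁ : ∀ x y z, σ (x + y) z = σ x z * σ y z)
    (hσadd₂ : ∀ x y z, σ x (y + z) = σ x y * σ x z)
    (hNS : ∀ x y, (lam x y * σ x y * (σ y x)⁻¹ : 𝕂ˣ) =
      ((-1 : 𝕂ˣ)) ^ ((φ x).val * (φ y).val))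
    (hone : (1 : A) ∈ 𝒜 0)
    (hmul : ∀ (α β : Γ) (a b : A), a ∈ 𝒜 α → b ∈ 𝒜 β → a * b ∈ 𝒜 (α + β))
    (hcomm : ∀ (α β : Γ) (a b : A), a ∈ 𝒜 α → b ∈ 𝒜 β →
      a * b = (lam α β : 𝕂) • (b * a))
    {n : ℕ} (ν : Fin n → Γ) (x y : Γ)
    (X Y : Matrix (Fin n) (Fin n) A)
    (hX : ∀ i j, X i j ∈ 𝒜 (x + ν j - ν i))
    (hY : ∀ i j, Y i j ∈ 𝒜 (y + ν j - ν i)) :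
    ∀ i j,
      (σ (x + y) (ν j) * (σ (ν i) ((x + y) + ν j - ν i))⁻¹ : 𝕂) • (X * Y) i j
        = ((σ x y : 𝕂))⁻¹ •
            ∑ k, (σ (x + ν k - ν i) (y + ν j - ν k) : 𝕂) •
              (((σ x (ν k) * (σ (ν i) (x + ν k - ν i))⁻¹ : 𝕂) • X i k) *
               ((σ y (ν j) * (σ (ν k) (y + ν j - ν k))⁻¹ : 𝕂) • Y k j)) := by
  intro i j
  -- basic consequences of biadditivity
  have h0r : ∀ a, σ a 0 = 1 := by
    intro a
    have h := hσadd₂ a 0 0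
    simp only [add_zero] at h
    exact (left_eq_mul.mp h)
  have h0l : ∀ a, σ 0 a = 1 := by
    intro a
    have h := hσadd₁ 0 0 a
    simp only [add_zero] at h
    exact (left_eq_mul.mp h)
  have hnegr : ∀ a b, σ a (-b) = (σ a b)⁻¹ := by
    intro a b
    have h := hσadd₂ a b (-b)
    rw [add_neg_cancel, h0r] at h
    exact (eq_inv_of_mul_eq_one_left (by rw [mul_comm]; exact h.symm))
  have hnegl : ∀ a b, σ (-a) b = (σ a b)⁻¹ := by
    intro a b
    have h := hσadd₁ a (-a) b
    rw [add_neg_cancel, h0l] at h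
    exact (eq_inv_of_mul_eq_one_left (by rw [mul_comm]; exact h.symm))
  have key : ∀ k : Fin n,
      (σ (x + y) (ν j) * (σ (ν i) ((x + y) + ν j - ν i))⁻¹ : 𝕂)
        = (σ x y : 𝕂)⁻¹ * ((σ (x + ν k - ν i) (y + ν j - ν k) : 𝕂) *
            ((σ x (ν k) * (σ (ν i) (x + ν k - ν i))⁻¹ : 𝕂) *
             (σ y (ν j) * (σ (ν k) (y + ν j - ν k))⁻¹ : 𝕂))) := by
    intro k
    simp only [sub_eq_add_neg, hσadd₁, hσadd₂, hnegl, hnegr, Units.val_mul,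
      Units.val_inv_eq_inv_val, mul_inv_rev, inv_inv]
    field_simp
  simp only [Matrix.mul_apply, Finset.smul_sum]
  refine Finset.sum_congr rfl fun k _ => ?_
  rw [smul_mul_smul_comm, smul_smul, smul_smul, key k]

  ring_nf
end
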